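/- For the de Sitter-Schwarzschild potential f with f(s)^2 = 1 - s^2 - m s^{2-n} and horizon radii s1 < s2 (positive roots of f^2), the surface gravities κ1 = -s1 + ((n-2)m/2) s1^{1-n} and κ2 = s2 - ((n-2)m/2) s2^{1-n} are both positive. -/

import Mathlib

/-!
At a positive root `s` of `V(s) = 1 - s² - m s^{2-n}` the surface gravity has the sign of
`sⁿ - (n-2)m/2`, so the claim says that the horizons lie on either side of the critical point
`s₀ = ((n-2)m/2)^{1/n}` of `V`. The bound on `m` is exactly `V(s₀) > 0`, while `V < 0` near `0`
and beyond `1`. The intermediate value theorem gives a zero of `V` on each side of `s₀`, and as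
`s₁ < s₂` are the only positive zeros, these are `s₁` and `s₂`.
-/

open Set

theorem mem_Ioo_of_lt_of_gt_of_lt {α δ : Type*} [ConditionallyCompleteLinearOrder α]
    [TopologicalSpace α] [OrderTopology α] [DenselyOrdered α] [LinearOrder δ] [TopologicalSpace δ]
    [OrderClosedTopology δ] {f : α → δ} {a x b s₁ s₂ : α} {y : δ}
    (hf : ContinuousOn f (Icc a b)) (hax : a ≤ x) (hxb : x ≤ b)
    (ha : f a < y) (hx : y < f x) (hb : f b < y)
    (hlevel : ∀ s ∈ Ioo a b, f s = y → s = s₁ ∨ s = s₂) (h₁₂ : s₁ < s₂) :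
    s₁ ∈ Ioo a x ∧ s₂ ∈ Ioo x b := by
  obtain ⟨r₁, hr₁, hfr₁⟩ :=
    intermediate_value_Ioo hax (hf.mono (Icc_subset_Icc_right hxb)) ⟨ha, hx⟩
  obtain ⟨r₂, hr₂, hfr₂⟩ :=
    intermediate_value_Ioo' hxb (hf.mono (Icc_subset_Icc_left hax)) ⟨hb, hx⟩
  have hr₁₂ : r₁ < r₂ := hr₁.2.trans hr₂.1
  rcases hlevel r₁ ⟨hr₁.1, hr₁.2.trans_le hxb⟩ hfr₁ with rfl | rfl <;>
    rcases hlevel r₂ ⟨hax.trans_lt hr₂.1, hr₂.2⟩ hfr₂ with rfl | rfl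
  · exact (lt_irrefl _ hr₁₂).elim
  · exact ⟨hr₁, hr₂⟩
  · exact (lt_asymm h₁₂ hr₁₂).elim
  · exact (lt_irrefl _ hr₁₂).elim

theorem zpow_one_sub_mul_pow_sub {K : Type*} [Field K] {s : K} (hs : s ≠ 0) (n : ℕ) (c : K) :
    s ^ ((1 : ℤ) - n) * (s ^ n - c) = s - c * s ^ ((1 : ℤ) - n) := by
  rw [zpow_sub₀ hs, zpow_one, zpow_natCast]
  field_simp

theorem sub_mul_zpow_one_sub_pos {s c : ℝ} {n : ℕ} (hs : 0 < s) (h : c < s ^ n) :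
    0 < s - c * s ^ ((1 : ℤ) - n) := by
  rw [← zpow_one_sub_mul_pow_sub hs.ne']
  exact mul_pos (zpow_pos hs _) (sub_pos.mpr h)

theorem neg_add_mul_zpow_one_sub_pos {s c : ℝ} {n : ℕ} (hs : 0 < s) (h : s ^ n < c) :
    0 < -s + c * s ^ ((1 : ℤ) - n) := by
  rw [neg_add_eq_sub, ← neg_sub, ← zpow_one_sub_mul_pow_sub hs.ne', ← mul_neg, neg_sub]
  exact mul_pos (zpow_pos hs _) (sub_pos.mpr h)

namespace DeSitterSchwarzschild

noncomputable def potential (n : ℕ) (m s : ℝ) : ℝ := 1 - s ^ 2 - m * s ^ ((2 : ℤ) - n)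

/-- `V'(s) = -2s + (n-2) m s^{1-n}` vanishes exactly where `sⁿ = (n-2)m/2`. -/
noncomputable def criticalRadius (n : ℕ) (m : ℝ) : ℝ := (((n : ℝ) - 2) * m / 2) ^ ((n : ℝ)⁻¹)

variable {n : ℕ} {m : ℝ}

theorem continuousOn_potential : ContinuousOn (potential n m) (Ioi 0) := fun s hs =>
  ((continuousAt_const.sub (continuous_pow 2).continuousAt).sub
    (continuousAt_const.mul (continuousAt_zpow₀ s _ (Or.inl (ne_of_gt hs))))).continuousWithinAt

theorem potential_neg_of_one_lt (hm : 0 ≤ m) {s : ℝ} (hs : 1 < s) : potential n m s < 0 := by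
  have : 0 ≤ m * s ^ ((2 : ℤ) - n) := mul_nonneg hm (zpow_nonneg (by linarith) _)
  unfold potential
  nlinarith

theorem potential_neg_of_lt_of_le_one (hn : 3 ≤ n) {s : ℝ} (hs : 0 < s) (hs₁ : s ≤ 1)
    (hsm : s < m) : potential n m s < 0 := by
  have hinv : s⁻¹ ≤ s ^ ((2 : ℤ) - n) := by
    rw [← zpow_neg_one]
    exact zpow_le_zpow_right_of_le_one₀ hs hs₁ (by omega)
  have hm_inv : 1 < m * s⁻¹ := by
    rw [← div_eq_mul_inv, one_lt_div hs]
    exact hsm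
  have := mul_le_mul_of_nonneg_left hinv (hs.le.trans hsm.le)
  unfold potential
  nlinarith

theorem exists_potential_neg_mem_Ioo (hn : 3 ≤ n) (hm : 0 < m) {x : ℝ} (hx : 0 < x) :
    ∃ t ∈ Ioo 0 x, potential n m t < 0 := by
  have hmin_x := min_le_left x (min m 1)
  have hmin_m1 := min_le_right x (min m 1)
  refine ⟨min x (min m 1) / 2, ⟨by positivity, by linarith⟩,
    potential_neg_of_lt_of_le_one hn (by positivity) ?_ ?_⟩
  · linarith [min_le_right m 1]
  · linarith [min_le_left m 1]

theorem criticalRadius_pos (hn : 3 ≤ n) (hm : 0 < m) : 0 < criticalRadius n m := by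
  have : (3 : ℝ) ≤ n := by exact_mod_cast hn
  unfold criticalRadius
  exact Real.rpow_pos_of_pos (by nlinarith) _

theorem criticalRadius_pow (hn : 2 ≤ n) (hm : 0 ≤ m) :
    criticalRadius n m ^ n = ((n : ℝ) - 2) * m / 2 := by
  have : (2 : ℝ) ≤ n := by exact_mod_cast hn
  exact Real.rpow_inv_natCast_pow (by nlinarith) (by omega)

theorem criticalRadius_sq_lt (hn : 3 ≤ n) (hm : 0 ≤ m)
    (hm' : m < (2 / ((n : ℝ) - 2)) * (((n : ℝ) - 2) / n) ^ ((n : ℝ) / 2)) :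
    criticalRadius n m ^ 2 < ((n : ℝ) - 2) / n := by
  have hn' : (3 : ℝ) ≤ n := by exact_mod_cast hn
  have hq : 0 ≤ ((n : ℝ) - 2) / n := div_nonneg (by linarith) (by linarith)
  have hc : ((n : ℝ) - 2) * m / 2 < (((n : ℝ) - 2) / n) ^ ((n : ℝ) / 2) := by
    calc ((n : ℝ) - 2) * m / 2 = ((n : ℝ) - 2) / 2 * m := by ring
      _ < ((n : ℝ) - 2) / 2 * ((2 / ((n : ℝ) - 2)) * (((n : ℝ) - 2) / n) ^ ((n : ℝ) / 2)) :=
        mul_lt_mul_of_pos_left hm' (by linarith)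
      _ = (((n : ℝ) - 2) / n) ^ ((n : ℝ) / 2) := by
        field_simp [show (n : ℝ) - 2 ≠ 0 by linarith]
  calc criticalRadius n m ^ 2 = (((n : ℝ) - 2) * m / 2) ^ (2 / (n : ℝ)) := by
        rw [criticalRadius, ← Real.rpow_natCast, ← Real.rpow_mul (by nlinarith)]
        ring_nf
    _ < ((((n : ℝ) - 2) / n) ^ ((n : ℝ) / 2)) ^ (2 / (n : ℝ)) :=
        Real.rpow_lt_rpow (by nlinarith) hc (by positivity)
    _ = ((n : ℝ) - 2) / n := by
        rw [← Real.rpow_mul hq, div_mul_div_comm, mul_comm, div_self (by positivity),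
          Real.rpow_one]

theorem potential_criticalRadius_pos (hn : 3 ≤ n) (hm : 0 < m)
    (hm' : m < (2 / ((n : ℝ) - 2)) * (((n : ℝ) - 2) / n) ^ ((n : ℝ) / 2)) :
    0 < potential n m (criticalRadius n m) := by
  have hn' : (3 : ℝ) ≤ n := by exact_mod_cast hn
  have hsq := criticalRadius_sq_lt hn hm.le hm'
  rw [lt_div_iff₀ (by linarith)] at hsq
  have hpow := criticalRadius_pow (n := n) (by omega) hm.le
  have hs₀ := criticalRadius_pos hn hm
  set s₀ := criticalRadius n m
  have hn2 : (n : ℝ) - 2 ≠ 0 := by linarith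
  have hV : potential n m s₀ = ((n : ℝ) - 2 - s₀ ^ 2 * n) / ((n : ℝ) - 2) := by
    rw [potential, zpow_sub₀ hs₀.ne', zpow_natCast, hpow]
    field_simp
    ring
  rw [hV]
  exact div_pos (by linarith) (by linarith)

end DeSitterSchwarzschild

open DeSitterSchwarzschild in
theorem deSitterSchwarzschild_surface_gravities_positive_general
    (n : ℕ) (hn : 3 ≤ n) (m : ℝ)
    (hm : 0 < m)
    (hm' : m < (2 / ((n : ℝ) - 2)) * (((n : ℝ) - 2) / n) ^ ((n : ℝ) / 2))
    (V : ℝ → ℝ) (hV : ∀ s : ℝ, V s = 1 - s ^ 2 - m * s ^ ((2 : ℤ) - (n : ℤ)))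
    (s1 s2 : ℝ) (hlt : s1 < s2)
    (honly : ∀ s : ℝ, 0 < s → V s = 0 → s = s1 ∨ s = s2) :
    0 < -s1 + (((n : ℝ) - 2) * m / 2) * s1 ^ ((1 : ℤ) - (n : ℤ)) ∧
    0 < s2 - (((n : ℝ) - 2) * m / 2) * s2 ^ ((1 : ℤ) - (n : ℤ)) := by
  obtain rfl : V = potential n m := funext hV
  have hs₀ := criticalRadius_pos hn hm
  obtain ⟨a, ⟨ha, has₀⟩, hVa⟩ := exists_potential_neg_mem_Ioo hn hm hs₀
  obtain ⟨⟨has₁, hs₁s₀⟩, hs₀s₂, -⟩ := mem_Ioo_of_lt_of_gt_of_lt (b := criticalRadius n m + 1)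
    (continuousOn_potential.mono fun s hs => ha.trans_le hs.1) has₀.le (by linarith) hVa
    (potential_criticalRadius_pos hn hm hm') (potential_neg_of_one_lt hm.le (by linarith))
    (fun s hs => honly s (ha.trans hs.1)) hlt
  have hs₁ : 0 < s1 := ha.trans has₁
  rw [← criticalRadius_pow (by omega) hm.le]
  exact ⟨neg_add_mul_zpow_one_sub_pos hs₁ (pow_lt_pow_left₀ hs₁s₀ hs₁.le (by omega)),
    sub_mul_zpow_one_sub_pos (hs₁.trans hlt) (pow_lt_pow_left₀ hs₀s₂ hs₀.le (by omega))⟩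

/-- For the de Sitter-Schwarzschild potential, the surface gravities
`κ1 = -s1 + ((n-2)m/2) s1^{1-n}` and `κ2 = s2 - ((n-2)m/2) s2^{1-n}` at the two
horizons `s1 < s2` (the two positive roots of `1 - s^2 - m s^{2-n}`) are positive. -/
theorem deSitterSchwarzschild_surface_gravities_positive
    (n : ℕ) (hn : 3 ≤ n) (m : ℝ)
    (hm : 0 < m)
    (hm' : m < (2 / ((n : ℝ) - 2)) * (((n : ℝ) - 2) / n) ^ ((n : ℝ) / 2))
    (V : ℝ → ℝ) (hV : ∀ s : ℝ, V s = 1 - s ^ 2 - m * s ^ ((2 : ℤ) - (n : ℤ)))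
    (s1 s2 : ℝ) (hs1 : 0 < s1) (hlt : s1 < s2)
    (hroot1 : V s1 = 0) (hroot2 : V s2 = 0)
    (honly : ∀ s : ℝ, 0 < s → V s = 0 → s = s1 ∨ s = s2) :
    0 < -s1 + (((n : ℝ) - 2) * m / 2) * s1 ^ ((1 : ℤ) - (n : ℤ)) ∧
    0 < s2 - (((n : ℝ) - 2) * m / 2) * s2 ^ ((1 : ℤ) - (n : ℤ)) :=
  deSitterSchwarzschild_surface_gravities_positive_general n hn m hm hm' V hV s1 s2 hlt honly
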